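/- arXiv:0710.5758 — 4 statements merged into one kernel-verified Lean document; each statement's English description precedes it below -/
import Mathlib

section
/- Let m, n, l ≥ 1, let H₁ ∈ ℂ^{n×m} and H₂ ∈ ℂ^{l×n} be matrices, and let P₁, P₂ > 0. Define γ₁⋆ = sup{ P₁‖H₁s‖² : s ∈ ℂ^m, ‖s‖ = 1 } and γ₂⋆ = sup{ P₂‖H₂w‖² : w ∈ ℂ^n, ‖w‖ = 1 }. Then the supremum of P₁P₂|rᴴH₂WH₁s|² / (P₂‖WᴴH₂ᴴr‖² + 1) over all s ∈ ℂ^m with ‖s‖ = 1, r ∈ ℂ^l with ‖r‖ = 1, and W ∈ ℂ^{n×n} satisfying P₁‖WH₁s‖² + ‖W‖_F² = 1, equals γ₁⋆γ₂⋆ / (1 + γ₁⋆ + γ₂⋆). -/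
/-- Euclidean norm of a complex vector. -/
noncomputable def cnorm {k : ℕ} (v : Fin k → ℂ) : ℝ :=
  Real.sqrt (∑ i, ‖v i‖ ^ 2)

/-- Squared Frobenius norm of a complex matrix. -/
noncomputable def frobSq {p q : ℕ} (A : Matrix (Fin p) (Fin q) ℂ) : ℝ :=
  ∑ i, ∑ j, ‖A i j‖ ^ 2

/-!
Write `a = H₁ s`, `g = H₂ᴴ r`, `α = P₁‖a‖²`, `β = P₂‖g‖²`. By Cauchy–Schwarz, `|gᴴWa|²` is bounded
both by `‖g‖²‖Wa‖²` and by `‖Wᴴg‖²‖a‖²`, and `‖Wᴴg‖² ≤ ‖W‖_F²‖g‖² = (1 - P₁‖Wa‖²)‖g‖²` by the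
power constraint. A suitable combination of the two bounds gives `SNR ≤ αβ / (1 + α + β)`, which is
increasing in `α ≤ γ₁⋆` and `β ≤ γ₂⋆`. The suprema `γ₁⋆`, `γ₂⋆` are `P₁‖H₁‖²` and `P₂‖H₂ᴴ‖²` for the
spectral norm, attained by compactness of the unit sphere, and for maximizing `s`, `r` equality
holds for the matched rank-one relay matrix `W ∝ g aᴴ`.
-/

open Matrix WithLp
open scoped Matrix.Norms.L2Operator

section EuclideanNorm

variable {k p : ℕ}

lemma cnorm_eq_norm_toLp (v : Fin k → ℂ) : cnorm v = ‖toLp 2 v‖ := by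
  rw [EuclideanSpace.norm_eq]; rfl

lemma cnorm_nonneg (v : Fin k → ℂ) : 0 ≤ cnorm v := Real.sqrt_nonneg _

lemma cnorm_sq (v : Fin k → ℂ) : cnorm v ^ 2 = ∑ i, ‖v i‖ ^ 2 :=
  Real.sq_sqrt (by positivity)

lemma cnorm_eq_zero {v : Fin k → ℂ} : cnorm v = 0 ↔ v = 0 := by
  rw [cnorm_eq_norm_toLp, norm_eq_zero, toLp_eq_zero]

lemma cnorm_star (v : Fin k → ℂ) : cnorm (star v) = cnorm v := by
  simp only [cnorm, Pi.star_apply, norm_star]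

lemma cnorm_smul (c : ℂ) (v : Fin k → ℂ) : cnorm (c • v) = ‖c‖ * cnorm v := by
  rw [cnorm_eq_norm_toLp, cnorm_eq_norm_toLp, toLp_smul, norm_smul]

lemma star_dotProduct_self (v : Fin k → ℂ) : star v ⬝ᵥ v = ((cnorm v ^ 2 : ℝ) : ℂ) := by
  rw [cnorm_eq_norm_toLp, dotProduct_comm, ← EuclideanSpace.inner_toLp_toLp,
    inner_self_eq_norm_sq_to_K]
  norm_cast

lemma norm_star_dotProduct_le (u v : Fin k → ℂ) : ‖star u ⬝ᵥ v‖ ≤ cnorm u * cnorm v := by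
  rw [cnorm_eq_norm_toLp, cnorm_eq_norm_toLp, dotProduct_comm, ← EuclideanSpace.inner_toLp_toLp]
  exact norm_inner_le_norm _ _

lemma star_dotProduct_mulVec (A : Matrix (Fin p) (Fin k) ℂ) (r : Fin p → ℂ) (u : Fin k → ℂ) :
    star r ⬝ᵥ A *ᵥ u = star (Aᴴ *ᵥ r) ⬝ᵥ u := by
  rw [star_mulVec, conjTranspose_conjTranspose, dotProduct_mulVec]

end EuclideanNorm

section Frobenius

variable {k p : ℕ}

lemma frobSq_conjTranspose (A : Matrix (Fin p) (Fin k) ℂ) : frobSq Aᴴ = frobSq A := by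
  unfold frobSq
  rw [Finset.sum_comm]
  simp only [conjTranspose_apply, norm_star]

lemma frobSq_smul (c : ℂ) (A : Matrix (Fin p) (Fin k) ℂ) : frobSq (c • A) = ‖c‖ ^ 2 * frobSq A := by
  simp only [frobSq, Matrix.smul_apply, smul_eq_mul, norm_mul, mul_pow, Finset.mul_sum]

lemma frobSq_vecMulVec (u : Fin p → ℂ) (v : Fin k → ℂ) :
    frobSq (vecMulVec u v) = cnorm u ^ 2 * cnorm v ^ 2 := by
  simp only [frobSq, vecMulVec_apply, norm_mul, mul_pow, cnorm_sq, Finset.sum_mul_sum]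

lemma frobSq_pos {A : Matrix (Fin p) (Fin k) ℂ} (hA : A ≠ 0) : 0 < frobSq A := by
  obtain ⟨i, j, hij⟩ : ∃ i j, A i j ≠ 0 := by
    by_contra! h
    exact hA (Matrix.ext h)
  calc 0 < ‖A i j‖ ^ 2 := by positivity
    _ ≤ ∑ j, ‖A i j‖ ^ 2 := Finset.single_le_sum (f := fun j => ‖A i j‖ ^ 2)
          (fun _ _ => by positivity) (Finset.mem_univ j)
    _ ≤ frobSq A := Finset.single_le_sum (f := fun i => ∑ j, ‖A i j‖ ^ 2)
          (fun _ _ => by positivity) (Finset.mem_univ i)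

lemma cnorm_mulVec_sq_le_frobSq_mul (A : Matrix (Fin p) (Fin k) ℂ) (v : Fin k → ℂ) :
    cnorm (A *ᵥ v) ^ 2 ≤ frobSq A * cnorm v ^ 2 := by
  rw [cnorm_sq, frobSq, Finset.sum_mul]
  refine Finset.sum_le_sum fun i _ => ?_
  have hrow : ‖(A *ᵥ v) i‖ ≤ cnorm (star (A i)) * cnorm v := by
    simpa [mulVec] using norm_star_dotProduct_le (star (A i)) v
  calc ‖(A *ᵥ v) i‖ ^ 2 ≤ (cnorm (star (A i)) * cnorm v) ^ 2 := by gcongr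
    _ = (∑ j, ‖A i j‖ ^ 2) * cnorm v ^ 2 := by
      simp [mul_pow, cnorm_sq]

end Frobenius

section OperatorNorm

lemma ContinuousLinearMap.exists_norm_eq_one_and_norm_apply_eq_opNorm {𝕜 E F : Type*} [RCLike 𝕜]
    [NormedAddCommGroup E] [NormedSpace 𝕜 E] [FiniteDimensional 𝕜 E] [Nontrivial E]
    [NormedAddCommGroup F] [NormedSpace 𝕜 F] (f : E →L[𝕜] F) :
    ∃ x, ‖x‖ = 1 ∧ ‖f x‖ = ‖f‖ := by
  have := FiniteDimensional.proper_rclike 𝕜 E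
  obtain ⟨x, hx, hmax⟩ := (isCompact_sphere (0 : E) 1).exists_isMaxOn
    (Set.nonempty_coe_sort.1 (NormedSpace.sphere_nonempty_rclike 𝕜 zero_le_one))
    f.continuous.norm.continuousOn
  rw [mem_sphere_zero_iff_norm] at hx
  refine ⟨x, hx, le_antisymm (by simpa [hx] using f.le_opNorm x) ?_⟩
  exact f.opNorm_le_of_unit_norm (norm_nonneg _) fun y hy => hmax (mem_sphere_zero_iff_norm.2 hy)

variable {k p : ℕ}

lemma cnorm_mulVec_le (A : Matrix (Fin p) (Fin k) ℂ) (v : Fin k → ℂ) :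
    cnorm (A *ᵥ v) ≤ ‖A‖ * cnorm v := by
  simpa [cnorm_eq_norm_toLp] using l2_opNorm_mulVec A (toLp 2 v)

lemma exists_cnorm_eq_one_and_cnorm_mulVec_eq (A : Matrix (Fin p) (Fin k) ℂ) (hk : 1 ≤ k) :
    ∃ v, cnorm v = 1 ∧ cnorm (A *ᵥ v) = ‖A‖ := by
  have : Nonempty (Fin k) := ⟨⟨0, hk⟩⟩
  obtain ⟨x, hx, hAx⟩ := (toEuclideanLin.trans LinearMap.toContinuousLinearMap A)
    |>.exists_norm_eq_one_and_norm_apply_eq_opNorm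
  refine ⟨ofLp x, ?_, ?_⟩ <;> rw [cnorm_eq_norm_toLp, toLp_ofLp]
  exacts [hx, hAx]

lemma mul_cnorm_mulVec_sq_le (A : Matrix (Fin p) (Fin k) ℂ) {v : Fin k → ℂ} (hv : cnorm v = 1)
    {c : ℝ} (hc : 0 ≤ c) : c * cnorm (A *ᵥ v) ^ 2 ≤ c * ‖A‖ ^ 2 := by
  have := cnorm_mulVec_le A v
  rw [hv, mul_one] at this
  gcongr
  exact cnorm_nonneg _

lemma sSup_cnorm_mulVec_sq (A : Matrix (Fin p) (Fin k) ℂ) (hk : 1 ≤ k) {c : ℝ} (hc : 0 ≤ c) :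
    sSup {x : ℝ | ∃ v : Fin k → ℂ, cnorm v = 1 ∧ x = c * cnorm (A *ᵥ v) ^ 2} = c * ‖A‖ ^ 2 := by
  obtain ⟨v, hv, hAv⟩ := exists_cnorm_eq_one_and_cnorm_mulVec_eq A hk
  refine IsGreatest.csSup_eq ⟨⟨v, hv, by rw [hAv]⟩, ?_⟩
  rintro x ⟨w, hw, rfl⟩
  exact mul_cnorm_mulVec_sq_le A hw hc

end OperatorNorm

noncomputable def twoHopSNR (α β : ℝ) : ℝ := α * β / (1 + α + β)

lemma twoHopSNR_mono {α β α' β' : ℝ} (hα : 0 ≤ α) (hβ : 0 ≤ β) (hαα' : α ≤ α') (hββ' : β ≤ β') :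
    twoHopSNR α β ≤ twoHopSNR α' β' := by
  have hα' : 0 ≤ α' := hα.trans hαα'
  have hβ' : 0 ≤ β' := hβ.trans hββ'
  unfold twoHopSNR
  rw [div_le_div_iff₀ (by linarith) (by linarith)]
  nlinarith [mul_le_mul hαα' hββ' hβ hα', mul_le_mul_of_nonneg_left hββ' (mul_nonneg hα hα'),
    mul_le_mul_of_nonneg_left hαα' (mul_nonneg hβ hβ')]

lemma div_le_twoHopSNR {α β x y N : ℝ} (hα : 0 ≤ α) (hβ : 0 ≤ β) (hy : 0 ≤ y)
    (hyx : y ≤ β * (1 - x)) (hNα : N ≤ α * y) (hNβ : N ≤ β * x) :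
    N / (y + 1) ≤ twoHopSNR α β := by
  unfold twoHopSNR
  rw [div_le_div_iff₀ (by linarith) (by linarith)]
  -- the weights `α` and `1 + β` make the `y`-terms cancel once `β * x ≤ β - y` is used
  calc N * (1 + α + β) = α * N + (1 + β) * N := by ring
    _ ≤ α * (β * x) + (1 + β) * (α * y) := by gcongr
    _ ≤ α * (β - y) + (1 + β) * (α * y) := by gcongr; linarith
    _ = α * β * (y + 1) := by ring

section Relay

variable {n : ℕ}

noncomputable def relayPower (P₁ : ℝ) (a : Fin n → ℂ) (W : Matrix (Fin n) (Fin n) ℂ) : ℝ :=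
  P₁ * cnorm (W *ᵥ a) ^ 2 + frobSq W

/-- `a = H₁ s` is the signal at the relay and `g = H₂ᴴ r` the receive filter seen from the relay:
the SNR of the theorem depends on `H₁`, `H₂`, `s`, `r` only through them. -/
noncomputable def relaySNR (P₁ P₂ : ℝ) (a g : Fin n → ℂ) (W : Matrix (Fin n) (Fin n) ℂ) : ℝ :=
  P₁ * P₂ * ‖star g ⬝ᵥ W *ᵥ a‖ ^ 2 / (P₂ * cnorm (Wᴴ *ᵥ g) ^ 2 + 1)

variable {P₁ P₂ : ℝ}

lemma relaySNR_nonneg (hP₁ : 0 ≤ P₁) (hP₂ : 0 ≤ P₂) (a g : Fin n → ℂ)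
    (W : Matrix (Fin n) (Fin n) ℂ) : 0 ≤ relaySNR P₁ P₂ a g W := by
  unfold relaySNR
  positivity

lemma relaySNR_le_twoHopSNR (hP₁ : 0 ≤ P₁) (hP₂ : 0 ≤ P₂) {a g : Fin n → ℂ}
    {W : Matrix (Fin n) (Fin n) ℂ} (hW : relayPower P₁ a W = 1) :
    relaySNR P₁ P₂ a g W ≤ twoHopSNR (P₁ * cnorm a ^ 2) (P₂ * cnorm g ^ 2) := by
  have hv : cnorm (Wᴴ *ᵥ g) ^ 2 ≤ frobSq W * cnorm g ^ 2 := by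
    simpa [frobSq_conjTranspose] using cnorm_mulVec_sq_le_frobSq_mul Wᴴ g
  have hgu : ‖star g ⬝ᵥ W *ᵥ a‖ ≤ cnorm g * cnorm (W *ᵥ a) := norm_star_dotProduct_le _ _
  have hva : ‖star g ⬝ᵥ W *ᵥ a‖ ≤ cnorm (Wᴴ *ᵥ g) * cnorm a := by
    rw [star_dotProduct_mulVec]; exact norm_star_dotProduct_le _ _
  have hF : frobSq W = 1 - P₁ * cnorm (W *ᵥ a) ^ 2 := by
    rw [← hW, relayPower]; ring
  apply div_le_twoHopSNR (x := P₁ * cnorm (W *ᵥ a) ^ 2) (by positivity) (by positivity)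
    (by positivity)
  · calc P₂ * cnorm (Wᴴ *ᵥ g) ^ 2 ≤ P₂ * (frobSq W * cnorm g ^ 2) := by gcongr
      _ = _ := by rw [hF]; ring
  · calc P₁ * P₂ * ‖star g ⬝ᵥ W *ᵥ a‖ ^ 2 ≤ P₁ * P₂ * (cnorm (Wᴴ *ᵥ g) * cnorm a) ^ 2 := by
          gcongr
      _ = _ := by ring
  · calc P₁ * P₂ * ‖star g ⬝ᵥ W *ᵥ a‖ ^ 2 ≤ P₁ * P₂ * (cnorm g * cnorm (W *ᵥ a)) ^ 2 := by
          gcongr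
      _ = _ := by ring

lemma exists_relayPower_eq_one_relaySNR_eq (hP₂ : 0 ≤ P₂) (a g : Fin n → ℂ)
    {W₀ : Matrix (Fin n) (Fin n) ℂ} (hW₀ : 0 < relayPower P₁ a W₀) :
    ∃ W, relayPower P₁ a W = 1 ∧ relaySNR P₁ P₂ a g W =
      P₁ * P₂ * ‖star g ⬝ᵥ W₀ *ᵥ a‖ ^ 2 /
        (P₂ * cnorm (W₀ᴴ *ᵥ g) ^ 2 + relayPower P₁ a W₀) := by
  set c := relayPower P₁ a W₀
  set t : ℝ := (Real.sqrt c)⁻¹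
  have ht : ‖(t : ℂ)‖ ^ 2 * c = 1 := by
    rw [Complex.norm_real, Real.norm_eq_abs, sq_abs, inv_pow, Real.sq_sqrt hW₀.le,
      inv_mul_cancel₀ hW₀.ne']
  refine ⟨(t : ℂ) • W₀, ?_, ?_⟩
  · rw [← ht]
    simp only [relayPower, smul_mulVec, cnorm_smul, frobSq_smul, c]
    ring
  · have hstar : star (t : ℂ) = t := Complex.conj_ofReal t
    simp only [relaySNR, conjTranspose_smul, hstar, smul_mulVec, dotProduct_smul, smul_eq_mul,
      norm_mul, cnorm_smul]
    rw [div_eq_div_iff (by positivity) (by positivity)]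
    linear_combination (P₁ * P₂ * ‖star g ⬝ᵥ W₀ *ᵥ a‖ ^ 2) * ht

lemma exists_relayPower_eq_one_relaySNR_eq_twoHopSNR (hP₁ : 0 ≤ P₁) (hP₂ : 0 ≤ P₂)
    {a g : Fin n → ℂ} (ha : a ≠ 0) (hg : g ≠ 0) :
    ∃ W, relayPower P₁ a W = 1 ∧
      relaySNR P₁ P₂ a g W = twoHopSNR (P₁ * cnorm a ^ 2) (P₂ * cnorm g ^ 2) := by
  have hA : 0 < cnorm a := (cnorm_nonneg a).lt_of_ne' (cnorm_eq_zero.not.2 ha)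
  have hG : 0 < cnorm g := (cnorm_nonneg g).lt_of_ne' (cnorm_eq_zero.not.2 hg)
  have hWa : vecMulVec g (star a) *ᵥ a = ((cnorm a ^ 2 : ℝ) : ℂ) • g := by
    rw [vecMulVec_mulVec, star_dotProduct_self, op_smul_eq_smul]
  have hWg : (vecMulVec g (star a))ᴴ *ᵥ g = ((cnorm g ^ 2 : ℝ) : ℂ) • a := by
    rw [conjTranspose_vecMulVec, star_star, vecMulVec_mulVec, star_dotProduct_self,
      op_smul_eq_smul]
  have hpower : relayPower P₁ a (vecMulVec g (star a)) =
      cnorm a ^ 2 * cnorm g ^ 2 * (1 + P₁ * cnorm a ^ 2) := by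
    rw [relayPower, hWa, cnorm_smul, frobSq_vecMulVec, cnorm_star, Complex.norm_real, norm_pow,
      Real.norm_eq_abs, sq_abs]
    ring
  obtain ⟨W, hW, hSNR⟩ := exists_relayPower_eq_one_relaySNR_eq (P₁ := P₁) hP₂ a g
    (W₀ := vecMulVec g (star a)) (by rw [hpower]; positivity)
  refine ⟨W, hW, ?_⟩
  rw [hSNR, hpower, hWa, hWg, dotProduct_smul, star_dotProduct_self, cnorm_smul, smul_eq_mul,
    norm_mul]
  simp only [Complex.norm_real, norm_pow, Real.norm_eq_abs, sq_abs]
  rw [twoHopSNR, div_eq_div_iff (by positivity) (by positivity)]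
  ring

lemma exists_relayPower_eq_one_twoHopSNR_le_relaySNR (hn : 1 ≤ n) (hP₁ : 0 ≤ P₁) (hP₂ : 0 ≤ P₂)
    (a g : Fin n → ℂ) :
    ∃ W, relayPower P₁ a W = 1 ∧
      twoHopSNR (P₁ * cnorm a ^ 2) (P₂ * cnorm g ^ 2) ≤ relaySNR P₁ P₂ a g W := by
  by_cases hag : a = 0 ∨ g = 0
  · have : Nonempty (Fin n) := ⟨⟨0, hn⟩⟩
    obtain ⟨W, hW, -⟩ := exists_relayPower_eq_one_relaySNR_eq (P₁ := P₁) hP₂ a g (W₀ := 1)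
      (add_pos_of_nonneg_of_pos (by positivity) (frobSq_pos one_ne_zero))
    refine ⟨W, hW, ?_⟩
    have hzero : twoHopSNR (P₁ * cnorm a ^ 2) (P₂ * cnorm g ^ 2) = 0 := by
      rcases hag with rfl | rfl <;> simp [twoHopSNR, cnorm_eq_zero]
    exact hzero ▸ relaySNR_nonneg hP₁ hP₂ a g W
  · obtain ⟨ha, hg⟩ := not_or.1 hag
    obtain ⟨W, hW, hSNR⟩ := exists_relayPower_eq_one_relaySNR_eq_twoHopSNR hP₁ hP₂ ha hg
    exact ⟨W, hW, hSNR.ge⟩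

end Relay

/-- The supremum of the two-hop amplify-and-forward relay SNR
`P₁P₂|rᴴH₂WH₁s|² / (P₂‖WᴴH₂ᴴr‖² + 1)` over unit vectors `s`, `r` and relay matrices `W`
subject to the relay power constraint equals `γ₁⋆γ₂⋆ / (1 + γ₁⋆ + γ₂⋆)`. -/
theorem stmt0 (m n l : ℕ) (hm : 1 ≤ m) (hn : 1 ≤ n) (hl : 1 ≤ l)
    (H₁ : Matrix (Fin n) (Fin m) ℂ) (H₂ : Matrix (Fin l) (Fin n) ℂ)
    (P₁ P₂ : ℝ) (hP₁ : 0 < P₁) (hP₂ : 0 < P₂)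
    (γ₁ γ₂ : ℝ)
    (hγ₁ : γ₁ = sSup {x : ℝ | ∃ s : Fin m → ℂ,
        cnorm s = 1 ∧ x = P₁ * cnorm (H₁.mulVec s) ^ 2})
    (hγ₂ : γ₂ = sSup {x : ℝ | ∃ w : Fin n → ℂ,
        cnorm w = 1 ∧ x = P₂ * cnorm (H₂.mulVec w) ^ 2}) :
    sSup {x : ℝ | ∃ (s : Fin m → ℂ) (r : Fin l → ℂ) (W : Matrix (Fin n) (Fin n) ℂ),
        cnorm s = 1 ∧ cnorm r = 1 ∧
        P₁ * cnorm (W.mulVec (H₁.mulVec s)) ^ 2 + frobSq W = 1 ∧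
        x = P₁ * P₂ * ‖dotProduct (star r) (H₂.mulVec (W.mulVec (H₁.mulVec s)))‖ ^ 2 /
            (P₂ * cnorm ((W.conjTranspose).mulVec ((H₂.conjTranspose).mulVec r)) ^ 2 + 1)} =
      γ₁ * γ₂ / (1 + γ₁ + γ₂) := by
  change _ = twoHopSNR γ₁ γ₂
  have hγ₁' : γ₁ = P₁ * ‖H₁‖ ^ 2 := hγ₁.trans (sSup_cnorm_mulVec_sq H₁ hm hP₁.le)
  have hγ₂' : γ₂ = P₂ * ‖H₂ᴴ‖ ^ 2 := by
    rw [hγ₂, sSup_cnorm_mulVec_sq H₂ hn hP₂.le, l2_opNorm_conjTranspose]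
  have hbound : ∀ (s : Fin m → ℂ) (r : Fin l → ℂ) (W : Matrix (Fin n) (Fin n) ℂ),
      cnorm s = 1 → cnorm r = 1 → relayPower P₁ (H₁ *ᵥ s) W = 1 →
      relaySNR P₁ P₂ (H₁ *ᵥ s) (H₂ᴴ *ᵥ r) W ≤ twoHopSNR γ₁ γ₂ := fun s r W hs hr hW =>
    (relaySNR_le_twoHopSNR hP₁.le hP₂.le hW).trans <| twoHopSNR_mono (by positivity)
      (by positivity) (hγ₁' ▸ mul_cnorm_mulVec_sq_le H₁ hs hP₁.le)
      (hγ₂' ▸ mul_cnorm_mulVec_sq_le H₂ᴴ hr hP₂.le)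
  obtain ⟨s, hs, hs'⟩ := exists_cnorm_eq_one_and_cnorm_mulVec_eq H₁ hm
  obtain ⟨r, hr, hr'⟩ := exists_cnorm_eq_one_and_cnorm_mulVec_eq H₂ᴴ hl
  obtain ⟨W, hW, hSNR⟩ :=
    exists_relayPower_eq_one_twoHopSNR_le_relaySNR hn hP₁.le hP₂.le (H₁ *ᵥ s) (H₂ᴴ *ᵥ r)
  rw [hs', hr', ← hγ₁', ← hγ₂'] at hSNR
  refine IsGreatest.csSup_eq ⟨⟨s, r, W, hs, hr, hW, ?_⟩, ?_⟩
  · rw [star_dotProduct_mulVec]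
    exact le_antisymm hSNR (hbound s r W hs hr hW)
  · rintro x ⟨s, r, W, hs, hr, hW, rfl⟩
    rw [star_dotProduct_mulVec]
    exact hbound s r W hs hr hW
end

section
/- Let l ≥ 1, let x ∈ ℂ^l, let σ₁, …, σ_l ≥ 0 be real numbers, and let c₂ > 0. Write c₁ = ‖x‖. If Σ_{i=1}^l σ_i²|x_i|² + Σ_{i=1}^l σ_i² = 1, then Σ_{i=1}^l |x_i|² · σ_i²/(σ_i² + 1/c₂²) ≤ c₁²c₂² / (1 + c₁² + c₂²). -/
set_option maxHeartbeats 1000000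


/-- Under the relay power constraint `Σσᵢ²|xᵢ|² + Σσᵢ² = 1`, the relay SNR objective
`Σ|xᵢ|²·σᵢ²/(σᵢ² + 1/c₂²)` is bounded by `c₁²c₂²/(1 + c₁² + c₂²)`, where `c₁ = ‖x‖`. -/
theorem stmt4 (l : ℕ) (hl : 1 ≤ l) (x : Fin l → ℂ) (σ : Fin l → ℝ) (hσ : ∀ i, 0 ≤ σ i)
    (c₂ : ℝ) (hc₂ : 0 < c₂) (c₁ : ℝ) (hc₁ : c₁ = cnorm x)
    (hcon : ∑ i, σ i ^ 2 * ‖x i‖ ^ 2 + ∑ i, σ i ^ 2 = 1) :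
    ∑ i, ‖x i‖ ^ 2 * (σ i ^ 2 / (σ i ^ 2 + 1 / c₂ ^ 2)) ≤
      c₁ ^ 2 * c₂ ^ 2 / (1 + c₁ ^ 2 + c₂ ^ 2) := by
  set t := 1 / c₂ ^ 2 with ht_def
  have ht : 0 < t := by positivity
  set A := ∑ i, ‖x i‖ ^ 2 with hA_def
  have hA : 0 ≤ A := Finset.sum_nonneg fun i _ => by positivity
  have hc₁sq : c₁ ^ 2 = A := by
    rw [hc₁, cnorm, Real.sq_sqrt hA]
  have h1A : (0:ℝ) < 1 + A := by linarith
  set s₀ := 1 / (1 + A) with hs₀_def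
  have hs₀ : 0 < s₀ := by rw [hs₀_def]; positivity
  have hs₀t : 0 < s₀ + t := by linarith
  have key : ∀ s : ℝ, 0 ≤ s →
      s / (s + t) ≤ s₀ / (s₀ + t) + t / (s₀ + t) ^ 2 * (s - s₀) := by
    intro s hs
    have hst : 0 < s + t := by linarith
    have heq : s₀ / (s₀ + t) + t / (s₀ + t) ^ 2 * (s - s₀) - s / (s + t)
        = t * (s - s₀) ^ 2 / ((s₀ + t) ^ 2 * (s + t)) := by
      field_simp
      ring
    have hpos : 0 ≤ t * (s - s₀) ^ 2 / ((s₀ + t) ^ 2 * (s + t)) := by positivity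
    linarith
  have step1 : ∑ i, ‖x i‖ ^ 2 * (σ i ^ 2 / (σ i ^ 2 + t)) ≤
      ∑ i, ‖x i‖ ^ 2 * (s₀ / (s₀ + t) + t / (s₀ + t) ^ 2 * (σ i ^ 2 - s₀)) :=
    Finset.sum_le_sum fun i _ =>
      mul_le_mul_of_nonneg_left (key _ (sq_nonneg _)) (by positivity)
  have expand : ∀ i, ‖x i‖ ^ 2 * (s₀ / (s₀ + t) + t / (s₀ + t) ^ 2 * (σ i ^ 2 - s₀))
      = s₀ / (s₀ + t) * ‖x i‖ ^ 2
        + t / (s₀ + t) ^ 2 * (σ i ^ 2 * ‖x i‖ ^ 2) - t / (s₀ + t) ^ 2 * (s₀ * ‖x i‖ ^ 2) :=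
    fun i => by ring
  have step2 : ∑ i, ‖x i‖ ^ 2 * (s₀ / (s₀ + t) + t / (s₀ + t) ^ 2 * (σ i ^ 2 - s₀))
      = s₀ / (s₀ + t) * A
        + t / (s₀ + t) ^ 2 * ((∑ i, σ i ^ 2 * ‖x i‖ ^ 2) - s₀ * A) := by
    simp only [expand, Finset.sum_sub_distrib, Finset.sum_add_distrib, ← Finset.mul_sum]
    rw [hA_def]
    ring
  have hai : ∀ i, ‖x i‖ ^ 2 ≤ A := fun i => by
    rw [hA_def]
    exact Finset.single_le_sum (f := fun j => ‖x j‖ ^ 2) (fun j _ => by positivity) (Finset.mem_univ i)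
  have hSge : s₀ ≤ ∑ i, σ i ^ 2 := by
    have h2 : (1:ℝ) ≤ (1 + A) * ∑ i, σ i ^ 2 := by
      have hle : ∑ i, σ i ^ 2 * ‖x i‖ ^ 2 ≤ ∑ i, σ i ^ 2 * A :=
        Finset.sum_le_sum fun i _ =>
          mul_le_mul_of_nonneg_left (hai i) (sq_nonneg _)
      have hsum : ∑ i, σ i ^ 2 * A = A * ∑ i, σ i ^ 2 := by
        rw [← Finset.sum_mul]; ring
      linarith
    rw [hs₀_def, div_le_iff₀ h1A]
    linarith
  have hs₀1A : s₀ * (1 + A) = 1 := by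
    rw [hs₀_def]; field_simp
  have step3 : t / (s₀ + t) ^ 2 * ((∑ i, σ i ^ 2 * ‖x i‖ ^ 2) - s₀ * A) ≤ 0 := by
    have hD : 0 ≤ t / (s₀ + t) ^ 2 := by positivity
    have hneg : (∑ i, σ i ^ 2 * ‖x i‖ ^ 2) - s₀ * A ≤ 0 := by
      have hS1 : (∑ i, σ i ^ 2 * ‖x i‖ ^ 2) = 1 - ∑ i, σ i ^ 2 := by linarith
      nlinarith
    exact mul_nonpos_of_nonneg_of_nonpos hD hneg
  have step4 : s₀ / (s₀ + t) * A = c₁ ^ 2 * c₂ ^ 2 / (1 + c₁ ^ 2 + c₂ ^ 2) := by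
    have hc₂' : c₂ ≠ 0 := hc₂.ne'
    have h1A' : (1 + A) ≠ 0 := h1A.ne'
    have hdenpos : (0:ℝ) < 1 + A + c₂ ^ 2 := by nlinarith [sq_nonneg c₂]
    have hden : (1 + A + c₂ ^ 2) ≠ 0 := hdenpos.ne'
    rw [hc₁sq, hs₀_def, ht_def]
    field_simp
    ring
  calc ∑ i, ‖x i‖ ^ 2 * (σ i ^ 2 / (σ i ^ 2 + t))
      ≤ ∑ i, ‖x i‖ ^ 2 * (s₀ / (s₀ + t) + t / (s₀ + t) ^ 2 * (σ i ^ 2 - s₀)) := step1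
    _ = s₀ / (s₀ + t) * A
        + t / (s₀ + t) ^ 2 * ((∑ i, σ i ^ 2 * ‖x i‖ ^ 2) - s₀ * A) := step2
    _ ≤ s₀ / (s₀ + t) * A := by linarith
    _ = c₁ ^ 2 * c₂ ^ 2 / (1 + c₁ ^ 2 + c₂ ^ 2) := step4
end

section
/- Let m ≥ 1, R ≥ 1, let ν₁, …, ν_R ≥ 0 be real numbers, and let e₁, …, e_R and ẽ₁, …, ẽ_R and s be unit vectors in ℂ^m. Then | Σ_{i=1}^R ν_i²·(|e_iᴴs|² − |ẽ_iᴴs|²) | ≤ 2·Σ_{i=1}^R ν_i²·d(e_i, ẽ_i), where d(u, v) = √(1 − |uᴴv|²). -/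
/-- Chordal distance between complex vectors: `d(u,v) = √(1 − |uᴴv|²)`. -/
noncomputable def cdist {k : ℕ} (u v : Fin k → ℂ) : ℝ :=
  Real.sqrt (1 - ‖dotProduct (star u) v‖ ^ 2)

open scoped InnerProductSpace

section UnitVectors

variable {𝕜 E : Type*} [RCLike 𝕜] [NormedAddCommGroup E] [InnerProductSpace 𝕜 E]

theorem norm_sub_inner_smul_sq {u v : E} (hv : ‖v‖ = 1) :
    ‖u - ⟪v, u⟫_𝕜 • v‖ ^ 2 = ‖u‖ ^ 2 - ‖⟪v, u⟫_𝕜‖ ^ 2 := by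
  have hre : RCLike.re ⟪u, ⟪v, u⟫_𝕜 • v⟫_𝕜 = ‖⟪v, u⟫_𝕜‖ ^ 2 := by
    rw [inner_smul_right, ← inner_conj_symm, RCLike.conj_mul, ← RCLike.ofReal_pow,
      RCLike.ofReal_re, RCLike.norm_conj]
  rw [norm_sub_sq (𝕜 := 𝕜), hre, norm_smul, hv]
  ring

theorem norm_inner_le_norm_inner_add_sqrt {u v s : E} (hu : ‖u‖ = 1) (hv : ‖v‖ = 1)
    (hs : ‖s‖ = 1) :
    ‖⟪u, s⟫_𝕜‖ ≤ ‖⟪v, s⟫_𝕜‖ + √(1 - ‖⟪v, u⟫_𝕜‖ ^ 2) := by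
  set c := ⟪v, u⟫_𝕜
  have hc : ‖c‖ ≤ 1 := by simpa [hu, hv] using norm_inner_le_norm (𝕜 := 𝕜) v u
  have hw : ‖u - c • v‖ = √(1 - ‖c‖ ^ 2) := by
    have := norm_sub_inner_smul_sq (𝕜 := 𝕜) (u := u) hv
    rw [hu, one_pow] at this
    rw [← this, Real.sqrt_sq (norm_nonneg _)]
  have hsplit : ⟪u, s⟫_𝕜 = star c * ⟪v, s⟫_𝕜 + ⟪u - c • v, s⟫_𝕜 := by
    rw [inner_sub_left, inner_smul_left]
    simp
  calc ‖⟪u, s⟫_𝕜‖ ≤ ‖c‖ * ‖⟪v, s⟫_𝕜‖ + ‖u - c • v‖ * ‖s‖ := by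
        rw [hsplit, ← norm_star c, ← norm_mul]
        exact (norm_add_le _ _).trans (by gcongr; exact norm_inner_le_norm _ _)
    _ ≤ ‖⟪v, s⟫_𝕜‖ + √(1 - ‖c‖ ^ 2) := by
        rw [hw, hs, mul_one]
        gcongr
        exact mul_le_of_le_one_left (norm_nonneg _) hc

theorem abs_sq_norm_inner_sub_sq_norm_inner_le {u v s : E} (hu : ‖u‖ = 1) (hv : ‖v‖ = 1)
    (hs : ‖s‖ = 1) :
    |‖⟪u, s⟫_𝕜‖ ^ 2 - ‖⟪v, s⟫_𝕜‖ ^ 2| ≤ 2 * √(1 - ‖⟪u, v⟫_𝕜‖ ^ 2) := by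
  have hus : ‖⟪u, s⟫_𝕜‖ ≤ 1 := by simpa [hu, hs] using norm_inner_le_norm (𝕜 := 𝕜) u s
  have hvs : ‖⟪v, s⟫_𝕜‖ ≤ 1 := by simpa [hv, hs] using norm_inner_le_norm (𝕜 := 𝕜) v s
  have huv := norm_inner_le_norm_inner_add_sqrt (𝕜 := 𝕜) hu hv hs
  have hvu := norm_inner_le_norm_inner_add_sqrt (𝕜 := 𝕜) hv hu hs
  rw [norm_inner_symm v u] at huv
  rw [abs_le]
  constructor <;> nlinarith [norm_nonneg ⟪u, s⟫_𝕜, norm_nonneg ⟪v, s⟫_𝕜]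

end UnitVectors

theorem star_dotProduct_eq_inner {k : ℕ} (u v : Fin k → ℂ) :
    dotProduct (star u) v = ⟪WithLp.toLp 2 u, WithLp.toLp 2 v⟫_ℂ := by
  rw [EuclideanSpace.inner_toLp_toLp, dotProduct_comm]

theorem cnorm_eq_norm {k : ℕ} (v : Fin k → ℂ) : cnorm v = ‖WithLp.toLp 2 v‖ := by
  rw [EuclideanSpace.norm_eq]
  rfl

theorem abs_sq_norm_dotProduct_sub_le {k : ℕ} {u v s : Fin k → ℂ} (hu : cnorm u = 1)
    (hv : cnorm v = 1) (hs : cnorm s = 1) :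
    |‖dotProduct (star u) s‖ ^ 2 - ‖dotProduct (star v) s‖ ^ 2| ≤ 2 * cdist u v := by
  rw [cnorm_eq_norm] at hu hv hs
  simp only [cdist, star_dotProduct_eq_inner]
  exact abs_sq_norm_inner_sub_sq_norm_inner_le hu hv hs

theorem stmt15_general (m R : ℕ) (ν : Fin R → ℝ)
    (e et : Fin R → Fin m → ℂ) (s : Fin m → ℂ)
    (he : ∀ i, cnorm (e i) = 1) (het : ∀ i, cnorm (et i) = 1) (hs : cnorm s = 1) :
    |∑ i, ν i ^ 2 * (‖dotProduct (star (e i)) s‖ ^ 2 -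
        ‖dotProduct (star (et i)) s‖ ^ 2)| ≤
      2 * ∑ i, ν i ^ 2 * cdist (e i) (et i) := by
  calc _ ≤ ∑ i, ν i ^ 2 * |‖dotProduct (star (e i)) s‖ ^ 2 -
        ‖dotProduct (star (et i)) s‖ ^ 2| := by
        refine (Finset.abs_sum_le_sum_abs _ _).trans_eq (Finset.sum_congr rfl fun i _ => ?_)
        rw [abs_mul, abs_sq]
    _ ≤ ∑ i, ν i ^ 2 * (2 * cdist (e i) (et i)) := by
        gcongr with i
        exact abs_sq_norm_dotProduct_sub_le (he i) (het i) hs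
    _ = 2 * ∑ i, ν i ^ 2 * cdist (e i) (et i) := by
        rw [Finset.mul_sum]
        exact Finset.sum_congr rfl fun i _ => by ring

/-- Quantizing each singular vector `eᵢ` to `ẽᵢ` perturbs the direct-link received power by
at most `2 Σ νᵢ² d(eᵢ, ẽᵢ)`:
`| Σ νᵢ² (|eᵢᴴs|² − |ẽᵢᴴs|²) | ≤ 2 Σ νᵢ² d(eᵢ, ẽᵢ)`. -/
theorem stmt15 (m R : ℕ) (hm : 1 ≤ m) (hR : 1 ≤ R)
    (ν : Fin R → ℝ) (hν : ∀ i, 0 ≤ ν i)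
    (e et : Fin R → Fin m → ℂ) (s : Fin m → ℂ)
    (he : ∀ i, cnorm (e i) = 1) (het : ∀ i, cnorm (et i) = 1) (hs : cnorm s = 1) :
    |∑ i, ν i ^ 2 * (‖dotProduct (star (e i)) s‖ ^ 2 -
        ‖dotProduct (star (et i)) s‖ ^ 2)| ≤
      2 * ∑ i, ν i ^ 2 * cdist (e i) (et i) :=
  stmt15_general m R ν e et s he het hs
end

section
/- Let m, n ≥ 1, let H₀ ∈ ℂ^{l×m} and H₁ ∈ ℂ^{n×m}, let P₀, P₁ > 0 and γ₂⋆ ≥ 0. Suppose ν₁, ν₂ ≥ 0 and the unit vector e₁ ∈ ℂ^m satisfy ν₁²|e₁ᴴs|² ≤ ‖H₀s‖² ≤ ν₁²|e₁ᴴs|² + ν₂² for every unit vector s ∈ ℂ^m. Define F(a, b) = ab/(1 + a + b), γ(s) = F(P₁‖H₁s‖², γ₂⋆) + P₀‖H₀s‖², and ξ(s) = F(P₁‖H₁s‖², γ₂⋆) + P₀ν₁²|e₁ᴴs|². If s_mod is a unit vector attaining the supremum of ξ over the unit sphere of ℂ^m, then sup{ γ(s) : ‖s‖ = 1 } ≤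 γ(s_mod) + P₀ν₂². -/
/-- End-to-end two-hop relay SNR with hop SNRs `a`, `b`. -/
noncomputable def snrF (a b : ℝ) : ℝ := a * b / (1 + a + b)

/-!
Pointwise, `γ ≤ ξ + P₀ν₂²` by the upper singular-value bound, while at the maximiser `s_mod`
of `ξ` the lower bound gives `ξ(s_mod) ≤ γ(s_mod)`. Hence every value of `γ` on the sphere is
at most `ξ(s_mod) + P₀ν₂² ≤ γ(s_mod) + P₀ν₂²`; the set of values is nonempty since it contains
`γ(s_mod)`.
-/

theorem csSup_le_add_of_le_add_of_isMax {α β : Type*} [ConditionallyCompleteLattice β] [Add β]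
    [AddRightMono β] (p : α → Prop) (f g : α → β) (c : β) (a : α) (ha : p a)
    (hfg : ∀ x, p x → f x ≤ g x + c) (hmax : ∀ x, p x → g x ≤ g a) (hga : g a ≤ f a) :
    sSup {y | ∃ x, p x ∧ y = f x} ≤ f a + c := by
  refine csSup_le ⟨f a, a, ha, rfl⟩ ?_
  rintro y ⟨x, hx, rfl⟩
  calc f x ≤ g x + c := hfg x hx
    _ ≤ f a + c := by gcongr; exact (hmax x hx).trans hga

theorem stmt19_general (m n l : ℕ)
    (H₀ : Matrix (Fin l) (Fin m) ℂ) (H₁ : Matrix (Fin n) (Fin m) ℂ)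
    (P₀ P₁ : ℝ) (hP₀ : 0 < P₀)
    (γ₂ : ℝ)
    (ν₁ ν₂ : ℝ)
    (e₁ : Fin m → ℂ)
    (hbound : ∀ s : Fin m → ℂ, cnorm s = 1 →
      ν₁ ^ 2 * ‖dotProduct (star e₁) s‖ ^ 2 ≤ cnorm (H₀.mulVec s) ^ 2 ∧
      cnorm (H₀.mulVec s) ^ 2 ≤ ν₁ ^ 2 * ‖dotProduct (star e₁) s‖ ^ 2 + ν₂ ^ 2)
    (smod : Fin m → ℂ) (hsmod : cnorm smod = 1)
    (hattain : ∀ s : Fin m → ℂ, cnorm s = 1 →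
      snrF (P₁ * cnorm (H₁.mulVec s) ^ 2) γ₂ +
          P₀ * ν₁ ^ 2 * ‖dotProduct (star e₁) s‖ ^ 2 ≤
        snrF (P₁ * cnorm (H₁.mulVec smod) ^ 2) γ₂ +
          P₀ * ν₁ ^ 2 * ‖dotProduct (star e₁) smod‖ ^ 2) :
    sSup {x : ℝ | ∃ s : Fin m → ℂ, cnorm s = 1 ∧
        x = snrF (P₁ * cnorm (H₁.mulVec s) ^ 2) γ₂ + P₀ * cnorm (H₀.mulVec s) ^ 2} ≤
      (snrF (P₁ * cnorm (H₁.mulVec smod) ^ 2) γ₂ + P₀ * cnorm (H₀.mulVec smod) ^ 2) +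
        P₀ * ν₂ ^ 2 := by
  refine csSup_le_add_of_le_add_of_isMax (fun s => cnorm s = 1) _ _ _ smod hsmod ?_ hattain ?_
  · intro s hs
    have hupper := mul_le_mul_of_nonneg_left (hbound s hs).2 hP₀.le
    linarith
  · have hlower := mul_le_mul_of_nonneg_left (hbound smod hsmod).1 hP₀.le
    linarith

/-- SNR loss bound for the modified (rank-one direct-link) scheme: if
`ν₁²|e₁ᴴs|² ≤ ‖H₀s‖² ≤ ν₁²|e₁ᴴs|² + ν₂²` for all unit `s`, and the unit vector `s_mod`
maximizes `ξ(s) = F(P₁‖H₁s‖², γ₂⋆) + P₀ν₁²|e₁ᴴs|²` over the unit sphere, then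
`sup{γ(s) : ‖s‖ = 1} ≤ γ(s_mod) + P₀ν₂²`, where
`γ(s) = F(P₁‖H₁s‖², γ₂⋆) + P₀‖H₀s‖²`. -/
theorem stmt19 (m n l : ℕ) (hm : 1 ≤ m) (hn : 1 ≤ n)
    (H₀ : Matrix (Fin l) (Fin m) ℂ) (H₁ : Matrix (Fin n) (Fin m) ℂ)
    (P₀ P₁ : ℝ) (hP₀ : 0 < P₀) (hP₁ : 0 < P₁)
    (γ₂ : ℝ) (hγ₂ : 0 ≤ γ₂)
    (ν₁ ν₂ : ℝ) (hν₁ : 0 ≤ ν₁) (hν₂ : 0 ≤ ν₂)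
    (e₁ : Fin m → ℂ) (he₁ : cnorm e₁ = 1)
    (hbound : ∀ s : Fin m → ℂ, cnorm s = 1 →
      ν₁ ^ 2 * ‖dotProduct (star e₁) s‖ ^ 2 ≤ cnorm (H₀.mulVec s) ^ 2 ∧
      cnorm (H₀.mulVec s) ^ 2 ≤ ν₁ ^ 2 * ‖dotProduct (star e₁) s‖ ^ 2 + ν₂ ^ 2)
    (smod : Fin m → ℂ) (hsmod : cnorm smod = 1)
    (hattain : ∀ s : Fin m → ℂ, cnorm s = 1 →
      snrF (P₁ * cnorm (H₁.mulVec s) ^ 2) γ₂ +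
          P₀ * ν₁ ^ 2 * ‖dotProduct (star e₁) s‖ ^ 2 ≤
        snrF (P₁ * cnorm (H₁.mulVec smod) ^ 2) γ₂ +
          P₀ * ν₁ ^ 2 * ‖dotProduct (star e₁) smod‖ ^ 2) :
    sSup {x : ℝ | ∃ s : Fin m → ℂ, cnorm s = 1 ∧
        x = snrF (P₁ * cnorm (H₁.mulVec s) ^ 2) γ₂ + P₀ * cnorm (H₀.mulVec s) ^ 2} ≤
      (snrF (P₁ * cnorm (H₁.mulVec smod) ^ 2) γ₂ + P₀ * cnorm (H₀.mulVec smod) ^ 2) +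
        P₀ * ν₂ ^ 2 :=
  stmt19_general m n l H₀ H₁ P₀ P₁ hP₀ γ₂ ν₁ ν₂ e₁ hbound smod hsmod hattain
end
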